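/- arXiv:1403.5178 — 6 statements merged into one kernel-verified Lean document; each statement's English description precedes it below -/
import Mathlib

section
/- Let k, r ≥ 2, Q = (r-1)(k-1), σ = k-2, and let f : ℕ → ℂ be finitely supported. Define the Abel transform A f : ℤ → ℂ by A f(h) = Q^(|h|/2) f(|h|) + σ ∑_{j≥1} Q^(|h|/2 + j - 1) f(|h| + 2j - 1) + ((r-2)/(r-1)) ∑_{j≥1} Q^(|h|/2 + j) f(|h| + 2j). Then A f satisfies, for all n ∈ ℕ: Q^(-n/2) [ A f(n) - A f(n+2) + Q^(-1/2)(A f(n+1) - A f(n+3)) ] = f(n) - f(n+2) + (k-1)(f(n+1) - f(n+3)). -/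
/-!
The second difference `A m - A (m + 2)` telescopes: the tails of both series at `m + 2` are the
tails at `m` shifted by one index, so
`A m - A (m + 2) = Q ^ (m / 2) * (f m + σ f (m + 1) - (k - 1) f (m + 2))`,
using `((r - 2) / (r - 1) - 1) * Q = -(k - 1)`. The identity is this difference at `n` plus
`Q ^ (-1/2)` times the one at `n + 1`, rescaled by `Q ^ (-n/2)`.
-/

open Function

lemma summable_mul_comp_of_support_finite {f : ℕ → ℂ} (hf : (support f).Finite) (w : ℕ → ℂ)
    {φ : ℕ → ℕ} (hφ : ∀ j, j ≤ φ j) : Summable fun j => w j * f (φ j) := by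
  obtain ⟨B, hB⟩ := hf.bddAbove
  refine summable_of_hasFiniteSupport ((Set.finite_Iic B).subset fun j hj => ?_)
  have hφj : φ j ∈ support f := fun h => hj (by simp [h])
  exact (hφ j).trans (hB hφj)

noncomputable def abelTail (Q : ℝ) (f : ℕ → ℂ) (d m : ℕ) : ℂ :=
  ∑' j : ℕ, ((Q ^ ((m : ℝ) / 2 + j) : ℝ) : ℂ) * f (m + 2 * j + d)

section AbelTail

variable {Q : ℝ} {f : ℕ → ℂ}

lemma abelTail_sub_abelTail_add_two (hf : (support f).Finite) (d m : ℕ) :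
    abelTail Q f d m - abelTail Q f d (m + 2) = ((Q ^ ((m : ℝ) / 2) : ℝ) : ℂ) * f (m + d) := by
  have hshift : abelTail Q f d (m + 2) =
      ∑' j : ℕ, ((Q ^ ((m : ℝ) / 2 + (j + 1 : ℕ)) : ℝ) : ℂ) * f (m + 2 * (j + 1) + d) := by
    refine tsum_congr fun j => ?_
    rw [show m + 2 + 2 * j + d = m + 2 * (j + 1) + d by ring]
    push_cast
    ring_nf
  rw [hshift, abelTail, (summable_mul_comp_of_support_finite hf _ fun j => by omega).tsum_eq_zero_add]
  simp

lemma tsum_rpow_add_one_mul_eq_mul_abelTail (hQ : Q ≠ 0) (d m : ℕ) :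
    ∑' j : ℕ, ((Q ^ ((m : ℝ) / 2 + j + 1) : ℝ) : ℂ) * f (m + 2 * j + d)
      = (Q : ℂ) * abelTail Q f d m := by
  rw [abelTail, ← tsum_mul_left]
  refine tsum_congr fun j => ?_
  rw [Real.rpow_add_one hQ]
  push_cast
  ring

lemma abel_sub_abel_add_two (hQ : Q ≠ 0) (hf : (support f).Finite) (σ τ : ℂ) {A : ℕ → ℂ}
    (hA : ∀ m : ℕ, A m = ((Q ^ ((m : ℝ) / 2) : ℝ) : ℂ) * f m + σ * abelTail Q f 1 m
      + τ * ((Q : ℂ) * abelTail Q f 2 m)) (m : ℕ) :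
    A m - A (m + 2) = ((Q ^ ((m : ℝ) / 2) : ℝ) : ℂ) *
      (f m + σ * f (m + 1) + (τ - 1) * Q * f (m + 2)) := by
  have hpow : ((Q ^ (((m + 2 : ℕ) : ℝ) / 2) : ℝ) : ℂ) = ((Q ^ ((m : ℝ) / 2) : ℝ) : ℂ) * Q := by
    rw [show ((m + 2 : ℕ) : ℝ) / 2 = (m : ℝ) / 2 + 1 by push_cast; ring, Real.rpow_add_one hQ]
    push_cast
    ring
  rw [hA, hA, hpow]
  linear_combination σ * abelTail_sub_abelTail_add_two hf 1 m
    + τ * Q * abelTail_sub_abelTail_add_two hf 2 m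

end AbelTail

lemma rpow_neg_half_mul_add_eq {Q : ℝ} (hQ : 0 < Q) {D g : ℕ → ℂ}
    (hD : ∀ m : ℕ, D m = ((Q ^ ((m : ℝ) / 2) : ℝ) : ℂ) * g m) (n : ℕ) :
    ((Q ^ (-(n : ℝ) / 2) : ℝ) : ℂ) * (D n + ((Q ^ (-(1 : ℝ) / 2) : ℝ) : ℂ) * D (n + 1))
      = g n + g (n + 1) := by
  have hsplit : Q ^ (((n + 1 : ℕ) : ℝ) / 2) = Q ^ ((n : ℝ) / 2) * Q ^ ((1 : ℝ) / 2) := by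
    rw [← Real.rpow_add hQ]
    push_cast
    ring_nf
  have hneg : ∀ x : ℝ, Q ^ (-x / 2) = (Q ^ (x / 2))⁻¹ := fun x => by
    rw [neg_div, Real.rpow_neg hQ.le]
  have hn : ((Q ^ ((n : ℝ) / 2) : ℝ) : ℂ) ≠ 0 := by exact_mod_cast (Real.rpow_pos_of_pos hQ _).ne'
  have h1 : ((Q ^ ((1 : ℝ) / 2) : ℝ) : ℂ) ≠ 0 := by exact_mod_cast (Real.rpow_pos_of_pos hQ _).ne'
  rw [hD, hD, hsplit, hneg, hneg]
  push_cast
  field_simp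

theorem stmt1 (k r : ℕ) (hk : 2 ≤ k) (hr : 2 ≤ r)
    (Q : ℝ) (hQ : Q = ((r : ℝ) - 1) * ((k : ℝ) - 1))
    (f : ℕ → ℂ) (hf : (Function.support f).Finite)
    (A : ℤ → ℂ)
    (hA : ∀ h : ℤ, A h =
      ((Q ^ ((h.natAbs : ℝ) / 2) : ℝ) : ℂ) * f h.natAbs
      + ((k : ℂ) - 2) *
          ∑' j : ℕ, ((Q ^ ((h.natAbs : ℝ) / 2 + (j : ℝ)) : ℝ) : ℂ) * f (h.natAbs + 2 * j + 1)
      + (((r : ℂ) - 2) / ((r : ℂ) - 1)) *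
          ∑' j : ℕ, ((Q ^ ((h.natAbs : ℝ) / 2 + (j : ℝ) + 1) : ℝ) : ℂ) * f (h.natAbs + 2 * j + 2)) :
    ∀ n : ℕ,
      ((Q ^ (-(n : ℝ) / 2) : ℝ) : ℂ) *
        (A n - A ((n : ℤ) + 2) + ((Q ^ (-(1 : ℝ) / 2) : ℝ) : ℂ) * (A ((n : ℤ) + 1) - A ((n : ℤ) + 3)))
      = f n - f (n + 2) + ((k : ℂ) - 1) * (f (n + 1) - f (n + 3)) := by
  intro n
  have hQpos : 0 < Q := by
    rw [hQ]
    exact mul_pos (by norm_num; exact_mod_cast hr) (by norm_num; exact_mod_cast hk)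
  have hr1 : (r : ℂ) - 1 ≠ 0 := sub_ne_zero.mpr (by norm_cast; omega)
  have hτ : (((r : ℂ) - 2) / ((r : ℂ) - 1) - 1) * Q = -((k : ℂ) - 1) := by
    rw [hQ]
    push_cast
    field_simp
    ring
  have hdiff := abel_sub_abel_add_two hQpos.ne' hf ((k : ℂ) - 2) _ (A := fun m : ℕ => A m)
    (fun m => by simpa [abelTail, tsum_rpow_add_one_mul_eq_mul_abelTail hQpos.ne'] using hA m)
  have key := rpow_neg_half_mul_add_eq hQpos hdiff n
  simp only [hτ, Nat.cast_add, Nat.cast_ofNat, Nat.cast_one, add_assoc] at key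
  norm_num only [add_assoc] at key ⊢
  rw [key]
  ring
end

section
/- Let k, r ≥ 2 and Q = (r-1)(k-1), and let f : ℕ → ℂ be finitely supported with Abel transform A f as above. Then for every n ∈ ℕ, f(n) + (k-1) f(n+1) = ∑_{j≥0} Q^(-n/2 - j) [ A f(n+2j) - A f(n+2j+2) ] + ∑_{j≥1} Q^(-(n-1)/2 - j) [ A f(n+2j-1) - A f(n+2j+1) ]. -/
theorem stmt3 (k r : ℕ) (hk : 2 ≤ k) (hr : 2 ≤ r)
    (Q : ℝ) (hQ : Q = ((r : ℝ) - 1) * ((k : ℝ) - 1))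
    (f : ℕ → ℂ) (hf : (Function.support f).Finite)
    (A : ℕ → ℂ)
    (hA : ∀ h : ℕ, A h =
      ((Q ^ ((h : ℝ) / 2) : ℝ) : ℂ) * f h
      + ((k : ℂ) - 2) *
          ∑' j : ℕ, ((Q ^ ((h : ℝ) / 2 + (j : ℝ)) : ℝ) : ℂ) * f (h + 2 * j + 1)
      + (((r : ℂ) - 2) / ((r : ℂ) - 1)) *
          ∑' j : ℕ, ((Q ^ ((h : ℝ) / 2 + (j : ℝ) + 1) : ℝ) : ℂ) * f (h + 2 * j + 2)) :
    ∀ n : ℕ,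
      f n + ((k : ℂ) - 1) * f (n + 1)
        = (∑' j : ℕ, ((Q ^ (-(n : ℝ) / 2 - (j : ℝ)) : ℝ) : ℂ) * (A (n + 2 * j) - A (n + 2 * j + 2)))
        + ∑' j : ℕ, ((Q ^ (-((n : ℝ) - 1) / 2 - ((j : ℝ) + 1)) : ℝ) : ℂ) *
            (A (n + 2 * j + 1) - A (n + 2 * j + 3)) := by
  obtain ⟨B, hB⟩ := hf.bddAbove
  set N := B + 1 with hNdef
  have hN : ∀ m : ℕ, N ≤ m → f m = 0 := by
    intro m hm
    by_contra h
    have := hB (Function.mem_support.mpr h)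
    omega
  have hk1 : (1:ℝ) ≤ (k:ℝ) - 1 := by
    have : (2:ℝ) ≤ (k:ℝ) := by exact_mod_cast hk
    linarith
  have hr1 : (1:ℝ) ≤ (r:ℝ) - 1 := by
    have : (2:ℝ) ≤ (r:ℝ) := by exact_mod_cast hr
    linarith
  have hQ0 : (0:ℝ) < Q := by rw [hQ]; nlinarith
  have hmulp : ∀ a b : ℝ, ((Q ^ a : ℝ):ℂ) * ((Q ^ b : ℝ):ℂ) = ((Q ^ (a+b) : ℝ):ℂ) := by
    intro a b; rw [← Complex.ofReal_mul, ← Real.rpow_add hQ0]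
  have hsplit : ∀ (x : ℝ) (m : ℕ), ((Q ^ (x + (m:ℝ)) : ℝ):ℂ) = ((Q ^ x : ℝ):ℂ) * (Q:ℂ)^m := by
    intro x m
    rw [Real.rpow_add hQ0, Real.rpow_natCast, Complex.ofReal_mul, Complex.ofReal_pow]
  set F : ℕ → ℂ := fun m => f m + ((k:ℂ)-1) * f (m+1) with hFdef
  have hF0 : ∀ m, N ≤ m → F m = 0 := by
    intro m hm; simp [hFdef, hN m hm, hN (m+1) (by omega)]
  set T : ℕ → ℂ := fun h => f h + ((k:ℂ)-2) * ∑ j ∈ Finset.range N, (Q:ℂ)^j * f (h+2*j+1)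
      + (((r:ℂ)-2)/((r:ℂ)-1)) * ∑ j ∈ Finset.range N, (Q:ℂ)^(j+1) * f (h+2*j+2) with hTdef
  have hg : ∀ h : ℕ, A h = ((Q ^ ((h:ℝ)/2) : ℝ):ℂ) * T h := by
    intro h
    rw [hA h]
    have e1 : ∑' j : ℕ, ((Q ^ ((h : ℝ) / 2 + (j : ℝ)) : ℝ) : ℂ) * f (h + 2 * j + 1)
        = ∑ j ∈ Finset.range N, ((Q ^ ((h:ℝ)/2) : ℝ):ℂ) * ((Q:ℂ)^j * f (h + 2*j+1)) := by
      rw [tsum_eq_sum (s := Finset.range N) ?_]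
      · exact Finset.sum_congr rfl fun j _ => by rw [hsplit]; ring
      · intro j hj
        simp only [Finset.mem_range, not_lt] at hj
        rw [hN (h+2*j+1) (by omega)]; ring
    have e2 : ∑' j : ℕ, ((Q ^ ((h : ℝ) / 2 + (j : ℝ) + 1) : ℝ) : ℂ) * f (h + 2 * j + 2)
        = ∑ j ∈ Finset.range N, ((Q ^ ((h:ℝ)/2) : ℝ):ℂ) * ((Q:ℂ)^(j+1) * f (h + 2*j+2)) := by
      rw [tsum_eq_sum (s := Finset.range N) ?_]
      · refine Finset.sum_congr rfl fun j _ => ?_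
        have hx : (h:ℝ)/2 + (j:ℝ) + 1 = (h:ℝ)/2 + ((j+1 : ℕ):ℝ) := by push_cast; ring
        rw [hx, hsplit]; ring
      · intro j hj
        simp only [Finset.mem_range, not_lt] at hj
        rw [hN (h+2*j+2) (by omega)]; ring
    rw [e1, e2, ← Finset.mul_sum, ← Finset.mul_sum, hTdef]
    ring
  have hQC : (Q:ℂ) = ((r:ℂ)-1) * ((k:ℂ)-1) := by rw [hQ]; push_cast; ring
  have hr0 : ((r:ℂ)-1) ≠ 0 := by
    have h1 : ((r:ℂ)) - 1 = (((r - 1 : ℕ)) : ℂ) := by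
      have : 1 ≤ r := by omega
      push_cast [Nat.cast_sub this]; ring
    rw [h1]
    exact_mod_cast (by omega : r - 1 ≠ 0)
  have key : ∀ h : ℕ, ((Q ^ (-(h:ℝ)/2) : ℝ):ℂ) * (A h - A (h+2)) = F h - F (h+1) := by
    intro h
    rw [hg h, hg (h+2)]
    have hc : ((Q ^ (-(h:ℝ)/2) : ℝ):ℂ) * ((Q ^ ((h:ℝ)/2) : ℝ):ℂ) = 1 := by
      rw [hmulp, show (-(h:ℝ)/2 + (h:ℝ)/2) = (0:ℝ) from by ring, Real.rpow_zero]
      norm_num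
    have hc2 : ((Q ^ (-(h:ℝ)/2) : ℝ):ℂ) * ((Q ^ (((h+2:ℕ):ℝ)/2) : ℝ):ℂ) = (Q:ℂ) := by
      rw [hmulp]
      have hx : -(h:ℝ)/2 + ((h+2:ℕ):ℝ)/2 = 1 := by push_cast; ring
      rw [hx, Real.rpow_one]
    rw [mul_sub, ← mul_assoc, ← mul_assoc, hc, hc2, one_mul]
    -- shift identities
    have sh1 : ∑ j ∈ Finset.range N, (Q:ℂ)^j * f (h+2*j+1)
        = f (h+1) + (Q:ℂ) * ∑ j ∈ Finset.range N, (Q:ℂ)^j * f (h+2+2*j+1) := by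
      have e : (Q:ℂ) * ∑ j ∈ Finset.range N, (Q:ℂ)^j * f (h+2+2*j+1)
          = ∑ j ∈ Finset.range N, ((Q:ℂ)^(j+1) * f (h+2*(j+1)+1)) := by
        rw [Finset.mul_sum]
        refine Finset.sum_congr rfl fun j _ => ?_
        rw [show h+2*(j+1)+1 = h+2+2*j+1 from by ring]
        ring
      rw [e]
      have tele := Finset.sum_range_sub' (f := fun j => (Q:ℂ)^j * f (h+2*j+1)) N
      have : ∑ j ∈ Finset.range N, ((Q:ℂ)^j * f (h+2*j+1) - (Q:ℂ)^(j+1) * f (h+2*(j+1)+1))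
          = f (h+1) := by
        rw [tele, hN (h+2*N+1) (by omega)]
        simp
      rw [Finset.sum_sub_distrib] at this
      linear_combination this
    have sh2 : ∑ j ∈ Finset.range N, (Q:ℂ)^(j+1) * f (h+2*j+2)
        = (Q:ℂ) * f (h+2) + (Q:ℂ) * ∑ j ∈ Finset.range N, (Q:ℂ)^(j+1) * f (h+2+2*j+2) := by
      have e : (Q:ℂ) * ∑ j ∈ Finset.range N, (Q:ℂ)^(j+1) * f (h+2+2*j+2)
          = ∑ j ∈ Finset.range N, ((Q:ℂ)^(j+1+1) * f (h+2*(j+1)+2)) := by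
        rw [Finset.mul_sum]
        refine Finset.sum_congr rfl fun j _ => ?_
        rw [show h+2*(j+1)+2 = h+2+2*j+2 from by ring]
        ring
      rw [e]
      have tele := Finset.sum_range_sub' (f := fun j => (Q:ℂ)^(j+1) * f (h+2*j+2)) N
      have : ∑ j ∈ Finset.range N, ((Q:ℂ)^(j+1) * f (h+2*j+2) - (Q:ℂ)^(j+1+1) * f (h+2*(j+1)+2))
          = (Q:ℂ) * f (h+2) := by
        rw [tele, hN (h+2*N+2) (by omega)]
        simp
      rw [Finset.sum_sub_distrib] at this
      linear_combination this
    simp only [hTdef, hFdef]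
    rw [sh1, sh2, hQC]
    field_simp
    ring
  intro n
  have s1 : (∑' j : ℕ, ((Q ^ (-(n : ℝ) / 2 - (j : ℝ)) : ℝ) : ℂ) * (A (n + 2 * j) - A (n + 2 * j + 2)))
      = ∑' j : ℕ, (F (n+2*j) - F (n+2*j+1)) := by
    refine tsum_congr fun j => ?_
    have hx : -(n:ℝ)/2 - (j:ℝ) = -(((n+2*j : ℕ)):ℝ)/2 := by push_cast; ring
    rw [hx]
    exact key (n+2*j)
  have s2 : (∑' j : ℕ, ((Q ^ (-((n : ℝ) - 1) / 2 - ((j : ℝ) + 1)) : ℝ) : ℂ) *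
      (A (n + 2 * j + 1) - A (n + 2 * j + 3)))
      = ∑' j : ℕ, (F (n+2*j+1) - F (n+2*j+2)) := by
    refine tsum_congr fun j => ?_
    have hx : -((n:ℝ)-1)/2 - ((j:ℝ)+1) = -(((n+2*j+1 : ℕ)):ℝ)/2 := by push_cast; ring
    rw [hx]
    have hkey := key (n+2*j+1)
    rw [show n+2*j+1+2 = n+2*j+3 from by ring, show n+2*j+1+1 = n+2*j+2 from by ring] at hkey
    exact hkey
  rw [s1, s2]
  rw [tsum_eq_sum (s := Finset.range N)
      (by intro j hj; simp only [Finset.mem_range, not_lt] at hj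
          rw [hF0 (n+2*j) (by omega), hF0 (n+2*j+1) (by omega)]; ring),
    tsum_eq_sum (s := Finset.range N)
      (by intro j hj; simp only [Finset.mem_range, not_lt] at hj
          rw [hF0 (n+2*j+1) (by omega), hF0 (n+2*j+2) (by omega)]; ring),
    ← Finset.sum_add_distrib]
  have e : ∑ j ∈ Finset.range N, ((F (n+2*j) - F (n+2*j+1)) + (F (n+2*j+1) - F (n+2*j+2)))
      = ∑ j ∈ Finset.range N, ((fun j => F (n+2*j)) j - (fun j => F (n+2*j)) (j+1)) := by
    refine Finset.sum_congr rfl fun j _ => ?_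
    simp only
    rw [show n+2*(j+1) = n+2*j+2 from by ring]
    ring
  rw [e, Finset.sum_range_sub']
  rw [hF0 (n+2*N) (by omega)]
  simp [hFdef]
end

section
/- Let f : ℕ → ℂ be finitely supported with support contained in {0, 1, ..., n}. Then the Abel transform A f (defined by A f(h) = Q^(|h|/2) f(|h|) + σ ∑_{j≥1} Q^(|h|/2+j-1) f(|h|+2j-1) + ((r-2)/(r-1)) ∑_{j≥1} Q^(|h|/2+j) f(|h|+2j)) has support contained in {h ∈ ℤ : |h| ≤ n}. Conversely, if k ≤ r and the support of A f is contained in {|h| ≤ n}, then the support of f is contained in {0, ..., n}. -/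
/-!
If `f` vanishes beyond `m`, every term of the two series in `A f (±m)` involves some `f (m + i)`
with `i > 0`, so `A f (±m) = Q ^ (m / 2) f m`. This gives the first implication at once, and since
`Q > 0` it recovers `f m` from `A f (m)`; the converse then follows by downward induction from the
top of the (finite) support of `f`.
-/

open Function

/-- The Abel transform `A f h`, as a function of `m = |h|`. -/
noncomputable def abelTransform (k r : ℕ) (Q : ℝ) (f : ℕ → ℂ) (m : ℕ) : ℂ :=
  ((Q ^ ((m : ℝ) / 2) : ℝ) : ℂ) * f m
    + ((k : ℂ) - 2) * ∑' j : ℕ, ((Q ^ ((m : ℝ) / 2 + (j : ℝ)) : ℝ) : ℂ) * f (m + 2 * j + 1)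
    + (((r : ℂ) - 2) / ((r : ℂ) - 1)) *
        ∑' j : ℕ, ((Q ^ ((m : ℝ) / 2 + (j : ℝ) + 1) : ℝ) : ℂ) * f (m + 2 * j + 2)

theorem abelTransform_of_forall_gt_eq_zero (k r : ℕ) (Q : ℝ) {f : ℕ → ℂ} {m : ℕ}
    (hf : ∀ m', m < m' → f m' = 0) :
    abelTransform k r Q f m = ((Q ^ ((m : ℝ) / 2) : ℝ) : ℂ) * f m := by
  have hodd (j : ℕ) : f (m + 2 * j + 1) = 0 := hf _ (by omega)
  have heven (j : ℕ) : f (m + 2 * j + 2) = 0 := hf _ (by omega)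
  simp [abelTransform, hodd, heven]

theorem forall_gt_eq_zero_of_support_finite {M : Type*} [Zero M] {f : ℕ → M}
    (hf : (support f).Finite) {n : ℕ}
    (step : ∀ m, n < m → (∀ m', m < m' → f m' = 0) → f m = 0) :
    ∀ m, n < m → f m = 0 := by
  by_contra! hne
  have hfin : {m | n < m ∧ f m ≠ 0}.Finite := hf.subset fun m hm ↦ hm.2
  obtain ⟨m, ⟨hnm, hfm⟩, hmax⟩ := hfin.exists_maximal hne
  refine hfm (step m hnm fun m' hmm' ↦ ?_)
  by_contra hfm'
  exact hmm'.not_ge (hmax ⟨hnm.trans hmm', hfm'⟩ hmm'.le)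

theorem stmt5 (k r : ℕ) (hk : 2 ≤ k) (hr : 2 ≤ r)
    (Q : ℝ) (hQ : Q = ((r : ℝ) - 1) * ((k : ℝ) - 1))
    (f : ℕ → ℂ) (hf : (Function.support f).Finite)
    (A : ℤ → ℂ)
    (hA : ∀ h : ℤ, A h =
      ((Q ^ ((h.natAbs : ℝ) / 2) : ℝ) : ℂ) * f h.natAbs
      + ((k : ℂ) - 2) *
          ∑' j : ℕ, ((Q ^ ((h.natAbs : ℝ) / 2 + (j : ℝ)) : ℝ) : ℂ) * f (h.natAbs + 2 * j + 1)
      + (((r : ℂ) - 2) / ((r : ℂ) - 1)) *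
          ∑' j : ℕ, ((Q ^ ((h.natAbs : ℝ) / 2 + (j : ℝ) + 1) : ℝ) : ℂ) * f (h.natAbs + 2 * j + 2))
    (n : ℕ) :
    ((∀ m : ℕ, n < m → f m = 0) → ∀ h : ℤ, (n : ℤ) < |h| → A h = 0) ∧
    (k ≤ r → (∀ h : ℤ, (n : ℤ) < |h| → A h = 0) → ∀ m : ℕ, n < m → f m = 0) := by
  have hA' (h : ℤ) : A h = abelTransform k r Q f h.natAbs := hA h
  have hQpos : 0 < Q := by
    have hr' : (2 : ℝ) ≤ r := by exact_mod_cast hr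
    have hk' : (2 : ℝ) ≤ k := by exact_mod_cast hk
    rw [hQ]
    nlinarith
  refine ⟨fun hsupp h hn ↦ ?_, fun _ hA0 ↦ forall_gt_eq_zero_of_support_finite hf ?_⟩
  · have hnh : n < h.natAbs := by rw [Int.abs_eq_natAbs] at hn; omega
    rw [hA', abelTransform_of_forall_gt_eq_zero k r Q fun m' hm' ↦ hsupp m' (by omega),
      hsupp _ hnh, mul_zero]
  · intro m hnm hvanish
    have hAm : A m = 0 := hA0 m (by rw [abs_of_nonneg (by positivity)]; exact_mod_cast hnm)
    rw [hA', Int.natAbs_natCast, abelTransform_of_forall_gt_eq_zero k r Q hvanish] at hAm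
    have hQm : ((Q ^ ((m : ℝ) / 2) : ℝ) : ℂ) ≠ 0 := by
      exact_mod_cast (Real.rpow_pos_of_pos hQpos _).ne'
    exact (mul_eq_zero.mp hAm).resolve_left hQm
end

section
/- Let 1 ≤ p ≤ 2, k, r ≥ 2, Q = (r-1)(k-1) > 1. Suppose f : ℕ → ℂ satisfies |f(n)| ≤ C (1+n)^(-(m+2)) Q^(-n/p) for all n, for some constant C and integer m ≥ 0. Then the Abel transform A f satisfies |A f(h)| ≤ C' (1+h)^(-m) Q^(-(1/p - 1/2) h) for all h ∈ ℕ, where C' depends only on C, p, m, k, r. -/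
/-!
Each term of `A f (h)` is `Q ^ e * f n` with `h ≤ n` and `e ≤ n / 2`. Since `1 / 2 - 1 / p ≤ 0`,
the decay hypothesis gives
`Q ^ e * Q ^ (-n / p) ≤ Q ^ ((1 / 2 - 1 / p) n) ≤ Q ^ ((1 / 2 - 1 / p) h)`,
and the polynomial factor `(1 + n) ^ (-(m + 2))` splits into `(1 + h) ^ (-m)` times the summable
`(1 + j) ^ (-2)`, where `j` is the summation index.
-/

open Real

lemma summable_one_add_nat_rpow_neg_two : Summable (fun j : ℕ => (1 + (j : ℝ)) ^ (-2 : ℝ)) := by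
  have h := (summable_nat_add_iff 1).mpr (Real.summable_nat_rpow.mpr (by norm_num : (-2 : ℝ) < -1))
  refine h.congr fun j => ?_
  push_cast
  rw [add_comm]

lemma norm_tsum_le_mul_tsum_one_add_rpow_neg_two {E : Type*} [SeminormedAddCommGroup E]
    {g : ℕ → E} {B : ℝ} (hg : ∀ j : ℕ, ‖g j‖ ≤ B * (1 + (j : ℝ)) ^ (-2 : ℝ)) :
    ‖∑' j, g j‖ ≤ B * ∑' j : ℕ, (1 + (j : ℝ)) ^ (-2 : ℝ) :=
  tsum_of_norm_bounded (summable_one_add_nat_rpow_neg_two.hasSum.mul_left B) hg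

lemma one_add_rpow_neg_add_le_mul {a b x s t : ℝ} (ha : 0 ≤ a) (hb : 0 ≤ b) (hax : a ≤ x)
    (hbx : b ≤ x) (hs : 0 ≤ s) (ht : 0 ≤ t) :
    (1 + x) ^ (-(s + t)) ≤ (1 + a) ^ (-s) * (1 + b) ^ (-t) := by
  rw [neg_add, rpow_add (by linarith)]
  exact mul_le_mul (rpow_le_rpow_of_nonpos (by linarith) (by linarith) (by linarith))
    (rpow_le_rpow_of_nonpos (by linarith) (by linarith) (by linarith))
    (rpow_nonneg (by linarith) _) (rpow_nonneg (by linarith) _)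

lemma rpow_mul_rpow_neg_div_le {Q p e x y : ℝ} (hQ : 1 ≤ Q) (hp : 0 < p) (hp2 : p ≤ 2)
    (hyx : y ≤ x) (he : e ≤ x / 2) :
    Q ^ e * Q ^ (-x / p) ≤ Q ^ (-(1 / p - 1 / 2) * y) := by
  rw [← rpow_add (by linarith)]
  apply rpow_le_rpow_of_exponent_le hQ
  have hp' : 1 / 2 ≤ 1 / p := one_div_le_one_div_of_le hp hp2
  have hxy : (1 / p - 1 / 2) * y ≤ (1 / p - 1 / 2) * x := by gcongr
  calc e + -x / p ≤ x / 2 + -x / p := by linarith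
    _ = -((1 / p - 1 / 2) * x) := by ring
    _ ≤ -(1 / p - 1 / 2) * y := by rw [neg_mul]; linarith

lemma norm_rpow_mul_le_of_decay {Q p C : ℝ} {m : ℕ} {f : ℕ → ℂ}
    (hf : ∀ n : ℕ, ‖f n‖ ≤ C * (1 + (n : ℝ)) ^ (-((m : ℝ) + 2)) * Q ^ (-(n : ℝ) / p))
    (hQ : 1 ≤ Q) (hp : 0 < p) (hp2 : p ≤ 2) (hC : 0 ≤ C)
    {h n j : ℕ} {e : ℝ} (hhn : h ≤ n) (hjn : j ≤ n) (he : e ≤ n / 2) :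
    ‖((Q ^ e : ℝ) : ℂ) * f n‖ ≤
      C * ((1 + (h : ℝ)) ^ (-(m : ℝ)) * Q ^ (-(1 / p - 1 / 2) * (h : ℝ))) *
        (1 + (j : ℝ)) ^ (-2 : ℝ) := by
  have hQ0 : 0 ≤ Q := by linarith
  have hpoly := one_add_rpow_neg_add_le_mul (s := m) (t := 2) h.cast_nonneg j.cast_nonneg
    (Nat.cast_le.mpr hhn) (Nat.cast_le.mpr hjn) m.cast_nonneg zero_le_two
  have hexp := rpow_mul_rpow_neg_div_le hQ hp hp2 (Nat.cast_le.mpr hhn) he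
  rw [norm_mul, Complex.norm_real, norm_of_nonneg (rpow_nonneg hQ0 e)]
  calc Q ^ e * ‖f n‖
      ≤ Q ^ e * (C * (1 + (n : ℝ)) ^ (-((m : ℝ) + 2)) * Q ^ (-(n : ℝ) / p)) := by
        gcongr
        exact hf n
    _ = C * (1 + (n : ℝ)) ^ (-((m : ℝ) + 2)) * (Q ^ e * Q ^ (-(n : ℝ) / p)) := by ring
    _ ≤ C * ((1 + (h : ℝ)) ^ (-(m : ℝ)) * (1 + (j : ℝ)) ^ (-2 : ℝ)) *
          Q ^ (-(1 / p - 1 / 2) * (h : ℝ)) := by gcongr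
    _ = _ := by ring

theorem stmt6_general (k r : ℕ)
    (Q : ℝ) (hQ1 : 1 < Q)
    (p : ℝ) (hp1 : 1 ≤ p) (hp2 : p ≤ 2)
    (C : ℝ) (hC : 0 < C) (m : ℕ)
    (f : ℕ → ℂ)
    (hf : ∀ n : ℕ, ‖f n‖ ≤ C * (1 + (n : ℝ)) ^ (-((m : ℝ) + 2)) * Q ^ (-(n : ℝ) / p))
    (A : ℕ → ℂ)
    (hA : ∀ h : ℕ, A h =
      ((Q ^ ((h : ℝ) / 2) : ℝ) : ℂ) * f h
      + ((k : ℂ) - 2) *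
          ∑' j : ℕ, ((Q ^ ((h : ℝ) / 2 + (j : ℝ)) : ℝ) : ℂ) * f (h + 2 * j + 1)
      + (((r : ℂ) - 2) / ((r : ℂ) - 1)) *
          ∑' j : ℕ, ((Q ^ ((h : ℝ) / 2 + (j : ℝ) + 1) : ℝ) : ℂ) * f (h + 2 * j + 2)) :
    ∃ C' : ℝ, 0 < C' ∧ ∀ h : ℕ,
      ‖A h‖ ≤ C' * (1 + (h : ℝ)) ^ (-(m : ℝ)) * Q ^ (-(1 / p - 1 / 2) * (h : ℝ)) := by
  set S := ∑' j : ℕ, (1 + (j : ℝ)) ^ (-2 : ℝ)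
  have hS : 0 ≤ S := tsum_nonneg fun j => by positivity
  refine ⟨C * (1 + (‖(k : ℂ) - 2‖ + ‖((r : ℂ) - 2) / ((r : ℂ) - 1)‖) * S), by positivity,
    fun h => ?_⟩
  set E := (1 + (h : ℝ)) ^ (-(m : ℝ)) * Q ^ (-(1 / p - 1 / 2) * (h : ℝ))
  have hterm := @norm_rpow_mul_le_of_decay Q p C m f hf hQ1.le (by linarith) hp2 hC.le h
  have h0 : ‖((Q ^ ((h : ℝ) / 2) : ℝ) : ℂ) * f h‖ ≤ C * E := by
    have h0 := hterm (j := 0) le_rfl (Nat.zero_le h) le_rfl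
    rwa [Nat.cast_zero, add_zero, one_rpow, mul_one] at h0
  have h1 : ‖∑' j : ℕ, ((Q ^ ((h : ℝ) / 2 + (j : ℝ)) : ℝ) : ℂ) * f (h + 2 * j + 1)‖ ≤ C * E * S :=
    norm_tsum_le_mul_tsum_one_add_rpow_neg_two fun j =>
      hterm (by omega) (by omega) (by push_cast; linarith)
  have h2 : ‖∑' j : ℕ, ((Q ^ ((h : ℝ) / 2 + (j : ℝ) + 1) : ℝ) : ℂ) * f (h + 2 * j + 2)‖ ≤
      C * E * S :=
    norm_tsum_le_mul_tsum_one_add_rpow_neg_two fun j =>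
      hterm (by omega) (by omega) (by push_cast; linarith)
  rw [hA h]
  calc _ ≤ C * E + ‖(k : ℂ) - 2‖ * (C * E * S) +
        ‖((r : ℂ) - 2) / ((r : ℂ) - 1)‖ * (C * E * S) := by
        refine (norm_add₃_le ..).trans (add_le_add (add_le_add h0 ?_) ?_) <;>
          rw [norm_mul] <;> gcongr
    _ = _ := by ring

theorem stmt6 (k r : ℕ) (hk : 2 ≤ k) (hr : 2 ≤ r)
    (Q : ℝ) (hQ : Q = ((r : ℝ) - 1) * ((k : ℝ) - 1)) (hQ1 : 1 < Q)
    (p : ℝ) (hp1 : 1 ≤ p) (hp2 : p ≤ 2)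
    (C : ℝ) (hC : 0 < C) (m : ℕ)
    (f : ℕ → ℂ)
    (hf : ∀ n : ℕ, ‖f n‖ ≤ C * (1 + (n : ℝ)) ^ (-((m : ℝ) + 2)) * Q ^ (-(n : ℝ) / p))
    (A : ℕ → ℂ)
    (hA : ∀ h : ℕ, A h =
      ((Q ^ ((h : ℝ) / 2) : ℝ) : ℂ) * f h
      + ((k : ℂ) - 2) *
          ∑' j : ℕ, ((Q ^ ((h : ℝ) / 2 + (j : ℝ)) : ℝ) : ℂ) * f (h + 2 * j + 1)
      + (((r : ℂ) - 2) / ((r : ℂ) - 1)) *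
          ∑' j : ℕ, ((Q ^ ((h : ℝ) / 2 + (j : ℝ) + 1) : ℝ) : ℂ) * f (h + 2 * j + 2)) :
    ∃ C' : ℝ, 0 < C' ∧ ∀ h : ℕ,
      ‖A h‖ ≤ C' * (1 + (h : ℝ)) ^ (-(m : ℝ)) * Q ^ (-(1 / p - 1 / 2) * (h : ℝ)) :=
  stmt6_general k r Q hQ1 p hp1 hp2 C hC m f hf A hA
end

section
/- Let k, r ≥ 2, Q = (r-1)(k-1). Suppose V : ℕ × ℕ → ℂ satisfies (rad L)_m V(m,n) = (rad L)_n V(m,n) for all m, n ∈ ℕ, where rad L acts on the first (resp. second) variable by (rad L) W(0) = W(0) − W(1) and (rad L) W(p) = (1/(r(k-1)))[(Q+1)W(p) − W(p−1) − Q W(p+1)] for p ≥ 1. Then V is symmetric: V(m,n) = V(n,m) for all m, n ∈ ℕ. -/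
/-! The antisymmetric part `A m n = V m n - V n m` satisfies the same equation. At
`(p+1, q+1)` the two `A (p+1) (q+1)` terms cancel, leaving a relation between two neighbouring
values on the antidiagonal `m + n = p + q + 3` and two on `m + n = p + q + 1`. So if `A`
vanishes below the antidiagonal `s`, it is constant on the interior of that antidiagonal, hence
zero there, the constant being its own negative by antisymmetry. The equation at `(s-1, 0)`
then gives `A s 0 = 0`, and induction on `m + n` concludes. -/

/-- The radial part of the Laplacian on a symmetric graph of type `k` and order `r`. -/
noncomputable def radL (k r : ℕ) (W : ℕ → ℂ) : ℕ → ℂ :=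
  fun p => match p with
  | 0 => W 0 - W 1
  | p + 1 => (1 / ((r : ℂ) * ((k : ℂ) - 1))) *
      ((((r : ℂ) - 1) * ((k : ℂ) - 1) + 1) * W (p + 1) - W p
        - ((r : ℂ) - 1) * ((k : ℂ) - 1) * W (p + 2))

theorem radL_sub (k r : ℕ) (W W' : ℕ → ℂ) (n : ℕ) :
    radL k r (fun p => W p - W' p) n = radL k r W n - radL k r W' n := by
  cases n <;> simp only [radL] <;> ring

def IsUltrahyperbolic (k r : ℕ) (V : ℕ → ℕ → ℂ) : Prop :=
  ∀ m n : ℕ, radL k r (fun p => V p n) m = radL k r (fun p => V m p) n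

namespace IsUltrahyperbolic

variable {k r : ℕ} {V A : ℕ → ℕ → ℂ}

theorem swap (hV : IsUltrahyperbolic k r V) : IsUltrahyperbolic k r (fun m n => V n m) :=
  fun m n => (hV n m).symm

theorem sub (hV : IsUltrahyperbolic k r V) (hA : IsUltrahyperbolic k r A) :
    IsUltrahyperbolic k r (fun m n => V m n - A m n) := fun m n => by
  rw [radL_sub, radL_sub, hV, hA]

theorem one_zero_eq (hA : IsUltrahyperbolic k r A) : A 1 0 = A 0 1 := by
  have h := hA 0 0
  simp only [radL] at h
  linear_combination -h

theorem succ_succ (hA : IsUltrahyperbolic k r A) (hk : k ≠ 1) (hr : r ≠ 0) (p q : ℕ) :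
    A p (q + 1) + ((r : ℂ) - 1) * ((k : ℂ) - 1) * A (p + 2) (q + 1)
      = A (p + 1) q + ((r : ℂ) - 1) * ((k : ℂ) - 1) * A (p + 1) (q + 2) := by
  have h := hA (p + 1) (q + 1)
  have hk' : (k : ℂ) - 1 ≠ 0 := sub_ne_zero.mpr (Nat.cast_ne_one.mpr hk)
  have hr' : (r : ℂ) ≠ 0 := Nat.cast_ne_zero.mpr hr
  simp only [radL] at h
  field_simp at h
  linear_combination -h

theorem succ_zero (hA : IsUltrahyperbolic k r A) (hk : k ≠ 1) (hr : r ≠ 0) (c : ℕ) :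
    ((r : ℂ) - 1) * ((k : ℂ) - 1) * A (c + 2) 0
      = (((r : ℂ) - 1) * ((k : ℂ) - 1) + 1) * A (c + 1) 0 - A c 0
        - (r : ℂ) * ((k : ℂ) - 1) * (A (c + 1) 0 - A (c + 1) 1) := by
  have h := hA (c + 1) 0
  have hk' : (k : ℂ) - 1 ≠ 0 := sub_ne_zero.mpr (Nat.cast_ne_one.mpr hk)
  have hr' : (r : ℂ) ≠ 0 := Nat.cast_ne_zero.mpr hr
  simp only [radL] at h
  field_simp at h
  linear_combination -h

section

variable (hk : 2 ≤ k) (hr : 2 ≤ r)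
include hk hr

private theorem cast_mul_ne_zero : ((r : ℂ) - 1) * ((k : ℂ) - 1) ≠ 0 :=
  mul_ne_zero (sub_ne_zero.mpr (Nat.cast_ne_one.mpr (by omega)))
    (sub_ne_zero.mpr (Nat.cast_ne_one.mpr (by omega)))

theorem succ_succ_eq_of_vanish_below (hA : IsUltrahyperbolic k r A) {a b : ℕ}
    (h : ∀ m n, m + n < a + b + 3 → A m n = 0) : A (a + 2) (b + 1) = A (a + 1) (b + 2) := by
  have hab := hA.succ_succ (by omega) (by omega) a b
  rw [h a (b + 1) (by omega), h (a + 1) b (by omega)] at hab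
  exact mul_left_cancel₀ (cast_mul_ne_zero hk hr) (by linear_combination hab)

theorem succ_succ_eq_one_of_vanish_below (hA : IsUltrahyperbolic k r A) {a b : ℕ}
    (h : ∀ m n, m + n < a + b + 2 → A m n = 0) : A (a + 1) (b + 1) = A 1 (a + b + 1) := by
  induction a generalizing b with
  | zero => simp
  | succ a ih =>
    rw [hA.succ_succ_eq_of_vanish_below hk hr (fun _ _ h' => h _ _ (by omega)),
      ih (fun _ _ h' => h _ _ (by omega))]
    congr 1
    omega

theorem succ_succ_eq_zero_of_vanish_below (hA : IsUltrahyperbolic k r A)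
    (hanti : ∀ m n, A n m = -A m n) {a b : ℕ} (h : ∀ m n, m + n < a + b + 2 → A m n = 0) :
    A (a + 1) (b + 1) = 0 := by
  have hab := hA.succ_succ_eq_one_of_vanish_below hk hr h
  have hs := hA.succ_succ_eq_one_of_vanish_below hk hr (a := a + b) (b := 0)
    (fun _ _ h' => h _ _ (by omega))
  have hs' := hanti 1 (a + b + 1)
  linear_combination hab + (hs' - hs) / 2

theorem left_eq_zero_of_vanish_below (hA : IsUltrahyperbolic k r A)
    (hanti : ∀ m n, A n m = -A m n) {s : ℕ} (h : ∀ m n, m + n < s → A m n = 0) :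
    A s 0 = 0 := by
  match s with
  | 0 => linear_combination hanti 0 0 / 2
  | 1 => linear_combination (hA.one_zero_eq + hanti 1 0) / 2
  | c + 2 =>
    have hc := hA.succ_zero (by omega) (by omega) c
    rw [h (c + 1) 0 (by omega), h c 0 (by omega),
      hA.succ_succ_eq_zero_of_vanish_below hk hr hanti (a := c) (b := 0)
        (fun _ _ h' => h _ _ (by omega))] at hc
    exact mul_left_cancel₀ (cast_mul_ne_zero hk hr) (by linear_combination hc)

theorem eq_zero_of_antisymm (hA : IsUltrahyperbolic k r A) (hanti : ∀ m n, A n m = -A m n)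
    (m n : ℕ) : A m n = 0 := by
  suffices h : ∀ s m n, m + n < s → A m n = 0 from h _ m n (Nat.lt_succ_self _)
  intro s
  induction s with
  | zero => intro m n h; omega
  | succ s ih =>
    intro m n hmn
    rcases Nat.lt_succ_iff_lt_or_eq.mp hmn with hlt | rfl
    · exact ih m n hlt
    match m, n with
    | m, 0 => exact hA.left_eq_zero_of_vanish_below hk hr hanti ih
    | 0, n + 1 =>
      rw [hanti, hA.left_eq_zero_of_vanish_below hk hr hanti (fun _ _ h => ih _ _ (by omega)),
        neg_zero]
    | a + 1, b + 1 =>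
      exact hA.succ_succ_eq_zero_of_vanish_below hk hr hanti (fun _ _ h => ih _ _ (by omega))

end

end IsUltrahyperbolic

theorem stmt14 (k r : ℕ) (hk : 2 ≤ k) (hr : 2 ≤ r)
    (V : ℕ → ℕ → ℂ)
    (hV : ∀ m n : ℕ, radL k r (fun p => V p n) m = radL k r (fun p => V m p) n) :
    ∀ m n : ℕ, V m n = V n m := by
  have hV : IsUltrahyperbolic k r V := hV
  intro m n
  exact sub_eq_zero.mp <| (hV.sub hV.swap).eq_zero_of_antisymm hk hr (fun _ _ => by ring) m n
end

section
/- Let k, r ≥ 2, Q = (r-1)(k-1) > 1, let γ₀ = 1 − (2Q^(1/2) + k − 2)/(r(k−1)), and let φ₀ be the unique solution of φ₀(0) = 1, φ₀(0) − φ₀(1) = γ₀ φ₀(0), and (1/(r(k-1)))[(Q+1)φ₀(n) − φ₀(n−1) − Q φ₀(n+1)] = γ₀ φ₀(n) for n ≥ 1. Then there is a constant C > 0 (depending on k, r) such that 0 < φ₀(n) ≤ C (1+n) Q^(-n/2) for all n ∈ ℕ. -/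
theorem stmt18 (k r : ℕ) (hk : 2 ≤ k) (hr : 2 ≤ r)
    (Q : ℝ) (hQ : Q = ((r : ℝ) - 1) * ((k : ℝ) - 1)) (hQ1 : 1 < Q)
    (γ₀ : ℝ)
    (hγ₀ : γ₀ = 1 - (2 * Q ^ ((1 : ℝ) / 2) + (k : ℝ) - 2) / ((r : ℝ) * ((k : ℝ) - 1)))
    (φ : ℕ → ℝ)
    (hφ0 : φ 0 = 1)
    (hφ1 : φ 0 - φ 1 = γ₀ * φ 0)
    (hφrec : ∀ n : ℕ,
      (1 / ((r : ℝ) * ((k : ℝ) - 1))) *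
        ((Q + 1) * φ (n + 1) - φ n - Q * φ (n + 2)) = γ₀ * φ (n + 1)) :
    ∃ C : ℝ, 0 < C ∧ ∀ n : ℕ,
      0 < φ n ∧ φ n ≤ C * (1 + (n : ℝ)) * Q ^ (-(n : ℝ) / 2) := by
  have hQ0 : (0:ℝ) < Q := lt_trans one_pos hQ1
  set s : ℝ := Q ^ ((1:ℝ)/2) with hs
  have hs1 : 1 < s := by
    rw [hs]
    exact (Real.one_lt_rpow_iff_of_pos hQ0).2 (Or.inl ⟨hQ1, by norm_num⟩)
  have hs0 : (0:ℝ) < s := lt_trans one_pos hs1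
  have hs2 : s * s = Q := by
    rw [hs, ← Real.rpow_add hQ0]; norm_num
  have hk' : (2:ℝ) ≤ (k:ℝ) := by exact_mod_cast hk
  have hr' : (2:ℝ) ≤ (r:ℝ) := by exact_mod_cast hr
  have hR : (r:ℝ) * ((k:ℝ) - 1) = Q + (k:ℝ) - 1 := by rw [hQ]; ring
  have hRpos : (0:ℝ) < (r:ℝ) * ((k:ℝ) - 1) := by rw [hR]; linarith
  have hRne : ((r:ℝ) * ((k:ℝ) - 1)) ≠ 0 := ne_of_gt hRpos
  set b : ℝ := s * (1 - γ₀) - 1 with hb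
  have hφ1' : φ 1 = 1 - γ₀ := by rw [hφ0] at hφ1; linarith
  have hγ' : γ₀ * ((r:ℝ) * ((k:ℝ) - 1)) = (r:ℝ) * ((k:ℝ) - 1) - (2*s + (k:ℝ) - 2) := by
    rw [hγ₀, sub_mul, div_mul_cancel₀ _ hRne, one_mul]
  have hrec : ∀ n, Q * φ (n+2) = 2 * s * φ (n+1) - φ n := by
    intro n
    have h := hφrec n
    have h2 : (Q + 1) * φ (n + 1) - φ n - Q * φ (n + 2)
        = γ₀ * ((r:ℝ) * ((k:ℝ) - 1)) * φ (n+1) := by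
      rw [one_div, inv_mul_eq_iff_eq_mul₀ hRne] at h
      linarith [h]
    rw [hγ'] at h2
    linear_combination (-1 : ℝ) * h2 - φ (n+1) * hR
  have key : ∀ n : ℕ, φ n * s ^ n = 1 + b * n := by
    intro n
    induction n using Nat.twoStepInduction with
    | zero => simp [hφ0]
    | one => rw [hφ1', hb]; push_cast; ring
    | more n ih1 ih2 =>
      have h := hrec n
      have e : φ (n+2) * s ^ (n+2) = (Q * φ (n+2)) * s ^ n := by
        rw [← hs2]; ring
      rw [e, h]
      push_cast at ih1 ih2 ⊢
      linear_combination 2 * ih2 - ih1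
  have hbR : b * ((r:ℝ) * ((k:ℝ) - 1)) = Q - 1 + ((k:ℝ) - 2) * (s - 1) := by
    rw [hb]
    linear_combination (-s) * hγ' + 2 * hs2 - hR
  have hbpos : 0 < b := by
    have h1 : 0 < b * ((r:ℝ) * ((k:ℝ) - 1)) := by nlinarith
    by_contra hc
    push_neg at hc
    nlinarith
  refine ⟨1 + b, by linarith, fun n => ?_⟩
  have hsn : (0:ℝ) < s ^ n := pow_pos hs0 n
  have hnn : (0:ℝ) ≤ (n:ℝ) := Nat.cast_nonneg n
  have hbn : (0:ℝ) ≤ b * n := mul_nonneg hbpos.le hnn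
  have hφn : φ n = (1 + b * n) / s ^ n := by
    rw [eq_div_iff hsn.ne']; exact key n
  have hQn : Q ^ (-(n:ℝ)/2) = (s ^ n)⁻¹ := by
    have e : -(n:ℝ)/2 = (1/2) * (-(n:ℝ)) := by ring
    rw [e, Real.rpow_mul hQ0.le, ← hs, Real.rpow_neg hs0.le, Real.rpow_natCast]
  constructor
  · rw [hφn]; exact div_pos (by linarith) hsn
  · rw [hφn, hQn, div_eq_mul_inv]
    have h2 : 1 + b * n ≤ (1 + b) * (1 + (n:ℝ)) := by nlinarith
    calc (1 + b * n) * (s ^ n)⁻¹ ≤ ((1 + b) * (1 + (n:ℝ))) * (s ^ n)⁻¹ := by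
          apply mul_le_mul_of_nonneg_right h2 (inv_nonneg.2 hsn.le)
      _ = (1 + b) * (1 + (n:ℝ)) * (s ^ n)⁻¹ := by ring
end
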